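/- arXiv:1801.00513 — 5 statements merged into one kernel-verified Lean document; each statement's English description precedes it below -/
import Mathlib

section
/- For any positive integers n_1, ..., n_t, the sum over all permutations σ of {1,...,t} of the product of reciprocals 1/(a_1(σ)·a_2(σ)···a_t(σ)), where a_i(σ) = n_{σ(i)} + n_{σ(i+1)} + ... + n_{σ(t)}, equals 1/(n_1·n_2···n_t). -/
/-!
Induct on `t`, splitting a permutation of `Fin (t + 1)` by the value `p = σ 0` via
`Equiv.Perm.decomposeFin`. The first tail sum is always the total `N = ∑ x`, and the remaining
ones are the tail sums of a permutation of the other `t` values. By induction the inner sum is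
`x p / ∏ x`, and summing over `p` gives `(1 / N) · N / ∏ x = 1 / ∏ x`.
-/

open Finset Equiv

lemma Fin.sum_filter_succ_le {M : Type*} [AddCommMonoid M] {t : ℕ} (f : Fin (t + 1) → M)
    (i : Fin t) :
    ∑ j ∈ univ.filter (fun j => i.succ ≤ j), f j
      = ∑ j ∈ univ.filter (fun j => i ≤ j), f j.succ := by
  rw [sum_filter, sum_filter, Fin.sum_univ_succ]
  simp [Fin.succ_le_succ_iff]

lemma Fin.prod_swap_zero_succ_mul {M : Type*} [CommMonoid M] {t : ℕ} (f : Fin (t + 1) → M)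
    (p : Fin (t + 1)) :
    f p * ∏ i : Fin t, f (swap 0 p i.succ) = ∏ i, f i := by
  rw [← Equiv.prod_comp (swap 0 p) f, Fin.prod_univ_succ, swap_apply_left]

lemma prod_inv_tailSum_decomposeFin_symm {K : Type*} [Semifield K] {t : ℕ}
    (x : Fin (t + 1) → K) (p : Fin (t + 1)) (e : Perm (Fin t)) :
    ∏ i, 1 / ∑ j ∈ univ.filter (fun j => i ≤ j), x (Perm.decomposeFin.symm (p, e) j)
      = 1 / (∑ i, x i) *
        ∏ i : Fin t, 1 / ∑ j ∈ univ.filter (fun j => i ≤ j), x (swap 0 p (e j).succ) := by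
  rw [Fin.prod_univ_succ, filter_true_of_mem fun j _ => Fin.zero_le j,
    Equiv.sum_comp (Perm.decomposeFin.symm (p, e)) x]
  simp only [Fin.sum_filter_succ_le, Perm.decomposeFin_symm_apply_succ]

theorem sum_perm_prod_inv_tailSum {K : Type*} [Field K] [LinearOrder K] [IsStrictOrderedRing K]
    {t : ℕ} (x : Fin t → K) (hx : ∀ i, 0 < x i) :
    ∑ σ : Perm (Fin t), ∏ i, 1 / ∑ j ∈ univ.filter (fun j => i ≤ j), x (σ j)
      = 1 / ∏ i, x i := by
  induction t with
  | zero => simp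
  | succ t ih =>
    have hsum : ∑ i, x i ≠ 0 := (sum_pos (fun i _ => hx i) univ_nonempty).ne'
    have inner (p : Fin (t + 1)) :
        ∑ e : Perm (Fin t), ∏ i : Fin t,
            1 / ∑ j ∈ univ.filter (fun j => i ≤ j), x (swap 0 p (e j).succ)
          = x p / ∏ i, x i := by
      rw [ih (fun i => x (swap 0 p i.succ)) (fun i => hx _), ← Fin.prod_swap_zero_succ_mul x p,
        div_mul_cancel_left₀ (hx p).ne', one_div]
    calc ∑ σ : Perm (Fin (t + 1)), ∏ i, 1 / ∑ j ∈ univ.filter (fun j => i ≤ j), x (σ j)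
        = ∑ p, 1 / (∑ i, x i) * (x p / ∏ i, x i) := by
          rw [← Equiv.sum_comp Perm.decomposeFin.symm, Fintype.sum_prod_type]
          simp only [prod_inv_tailSum_decomposeFin_symm, ← mul_sum, inner]
      _ = 1 / ∏ i, x i := by
          rw [← mul_sum, ← sum_div]
          field_simp

theorem stmt0_general (t : ℕ) (n : Fin t → ℕ) (hn : ∀ i, 1 ≤ n i) :
    ∑ σ : Equiv.Perm (Fin t),
      ∏ i : Fin t,
        (1 : ℝ) / (∑ j ∈ Finset.univ.filter (fun j => i ≤ j), (n (σ j) : ℝ))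
      = 1 / ∏ i : Fin t, (n i : ℝ) :=
  sum_perm_prod_inv_tailSum (fun i => (n i : ℝ)) fun i => Nat.cast_pos.mpr (hn i)

/-- Lemma C: for positive integers `n 1, ..., n t`, the sum over all permutations `σ` of
`{1,...,t}` of `1 / (a 1 σ ⋯ a t σ)`, where `a i σ = n (σ i) + ⋯ + n (σ t)` is the tail sum,
equals `1 / (n 1 ⋯ n t)`. -/
theorem stmt0 (t : ℕ) (ht : 1 ≤ t) (n : Fin t → ℕ) (hn : ∀ i, 1 ≤ n i) :
    ∑ σ : Equiv.Perm (Fin t),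
      ∏ i : Fin t,
        (1 : ℝ) / (∑ j ∈ Finset.univ.filter (fun j => i ≤ j), (n (σ j) : ℝ))
      = 1 / ∏ i : Fin t, (n i : ℝ) :=
  stmt0_general t n hn
end

section
/- For any z ∈ ℕ^n with entries in {1,...,m} where m = max_i z_i, the product over k = 1,...,m of α·Γ(e_k+1)·Γ(g_{k+1}+α)/Γ(g_k+α+1) equals (Γ(α)/Γ(n+α)) · (∏_{c ∈ C_z} Γ(|c|+1)) · ∏_{k=1}^m α/(g_k+α), where e_k = #{i : z_i = k}, g_k = #{i : z_i ≥ k}, and C_z is the partition of {1,...,n} induced by z. -/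
/-! Since `Γ(g_k + α + 1) = (g_k + α) Γ(g_k + α)`, the `k`-th factor on the left splits as
`Γ(e_k + 1) · α / (g_k + α) · Γ(g_{k+1} + α) / Γ(g_k + α)`. The last ratios telescope to
`Γ(g_{m+1} + α) / Γ(g_1 + α) = Γ(α) / Γ(n + α)`, and the factors `Γ(e_k + 1)` are the block
factors `Γ(|c| + 1)` of `C_z`, padded with `Γ(1) = 1` for the values `k ≤ m` that `z` misses. -/

open Finset

theorem Finset.prod_Icc_div_of_ne_zero {K : Type*} [CommGroupWithZero K] {f : ℕ → K}
    (hf : ∀ k, f k ≠ 0) {m n : ℕ} (hmn : m ≤ n + 1) :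
    ∏ i ∈ Icc m n, f (i + 1) / f i = f (n + 1) / f m := by
  lift f to ℕ → Kˣ using fun k => (hf k).isUnit
  rw [← Ico_add_one_right_eq_Icc]
  simpa only [Units.val_div_eq_div_val, Units.coe_prod] using
    congrArg Units.val (prod_Ico_div f hmn)

theorem Real.mul_Gamma_div_Gamma_add_one {c : ℝ} (hc : 0 < c) (x a b : ℝ) :
    x * a * Real.Gamma b / Real.Gamma (c + 1) = a * (x / c) * (Real.Gamma b / Real.Gamma c) := by
  have hΓ := (Real.Gamma_pos_of_pos hc).ne'
  rw [Real.Gamma_add_one hc.ne']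
  field_simp

theorem Finset.prod_image_levelSets_card {ι β M : Type*} [Fintype ι] [DecidableEq ι]
    [DecidableEq β] [CommMonoid M] (z : ι → β) {f : ℕ → M}
    (hf : f 0 = 1) {s : Finset β} (hs : univ.image z ⊆ s) :
    ∏ c ∈ (univ.image z).image (fun k => univ.filter (fun i => z i = k)), f c.card
      = ∏ k ∈ s, f (univ.filter (fun i => z i = k)).card := by
  rw [prod_image, prod_subset hs]
  · intro k _ hk
    rw [filter_false_of_mem fun i _ hi => hk (mem_image.2 ⟨i, mem_univ i, hi⟩), card_empty, hf]
  · simp only [coe_image, coe_univ, Set.image_univ]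
    rintro _ ⟨i, rfl⟩ b - hib
    simp only at hib
    have hi : i ∈ univ.filter (fun j => z j = b) := hib ▸ mem_filter.2 ⟨mem_univ i, rfl⟩
    exact (mem_filter.1 hi).2

theorem Finset.card_filter_sup_add_one_le_eq_zero (ι : Type*) [Fintype ι] (z : ι → ℕ) :
    (univ.filter (fun i => univ.sup z + 1 ≤ z i)).card = 0 := by
  rw [card_eq_zero, filter_eq_empty_iff]
  exact fun i _ => not_le.2 (Nat.lt_succ_of_le (le_sup (mem_univ i)))

theorem stmt3_general (n m : ℕ) (α : ℝ) (hα : 0 < α)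
    (z : Fin n → ℕ) (hz : ∀ i, 1 ≤ z i) (hm : m = Finset.univ.sup z) :
    ∏ k ∈ Finset.Icc 1 m,
        (α * Real.Gamma ((Finset.univ.filter (fun i => z i = k)).card + 1) *
          Real.Gamma ((Finset.univ.filter (fun i => k + 1 ≤ z i)).card + α) /
          Real.Gamma ((Finset.univ.filter (fun i => k ≤ z i)).card + α + 1))
      = (Real.Gamma α / Real.Gamma (n + α)) *
        (∏ c ∈ (Finset.image z Finset.univ).image
            (fun k => Finset.univ.filter (fun i => z i = k)),
          Real.Gamma (c.card + 1)) *
        ∏ k ∈ Finset.Icc 1 m,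
          (α / ((Finset.univ.filter (fun i => k ≤ z i)).card + α)) := by
  set G : ℕ → ℝ := fun k => Real.Gamma ((univ.filter (fun i => k ≤ z i)).card + α)
  have hG : ∀ k, G k ≠ 0 := fun k => (Real.Gamma_pos_of_pos (by positivity)).ne'
  have hG_one : G 1 = Real.Gamma (n + α) := by
    simp only [G, filter_true_of_mem fun i _ => hz i, card_univ, Fintype.card_fin]
  have hG_top : G (m + 1) = Real.Gamma α := by
    simp only [G, hm, card_filter_sup_add_one_le_eq_zero, Nat.cast_zero, zero_add]
  have hrange : univ.image z ⊆ Icc 1 m := fun k hk => by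
    obtain ⟨i, -, rfl⟩ := mem_image.1 hk
    exact mem_Icc.2 ⟨hz i, hm ▸ le_sup (mem_univ i)⟩
  rw [prod_image_levelSets_card z (f := fun c => Real.Gamma ((c : ℝ) + 1)) (by simp) hrange,
    prod_congr rfl fun k _ => Real.mul_Gamma_div_Gamma_add_one (by positivity) _ _ _,
    prod_mul_distrib, prod_mul_distrib, prod_Icc_div_of_ne_zero (f := G) hG (by omega), hG_one,
    hG_top]
  ring

/-- Lemma A computation (step (b)–(c) combined): for `z ∈ {1,2,...}^n` with maximum `m`,
`∏_{k=1}^m α·Γ(e_k+1)·Γ(g_{k+1}+α)/Γ(g_k+α+1)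
  = (Γ(α)/Γ(n+α)) · (∏_{c ∈ C_z} Γ(|c|+1)) · ∏_{k=1}^m α/(g_k+α)`,
where `e_k = #{i : z_i = k}`, `g_k = #{i : z_i ≥ k}`, and `C_z` is the partition of
`{1,...,n}` induced by `z` (blocks are the level sets of `z`). -/
theorem stmt3 (n m : ℕ) (hn : 1 ≤ n) (α : ℝ) (hα : 0 < α)
    (z : Fin n → ℕ) (hz : ∀ i, 1 ≤ z i) (hm : m = Finset.univ.sup z) :
    ∏ k ∈ Finset.Icc 1 m,
        (α * Real.Gamma ((Finset.univ.filter (fun i => z i = k)).card + 1) *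
          Real.Gamma ((Finset.univ.filter (fun i => k + 1 ≤ z i)).card + α) /
          Real.Gamma ((Finset.univ.filter (fun i => k ≤ z i)).card + α + 1))
      = (Real.Gamma α / Real.Gamma (n + α)) *
        (∏ c ∈ (Finset.image z Finset.univ).image
            (fun k => Finset.univ.filter (fun i => z i = k)),
          Real.Gamma (c.card + 1)) *
        ∏ k ∈ Finset.Icc 1 m,
          (α / ((Finset.univ.filter (fun i => k ≤ z i)).card + α)) :=
  stmt3_general n m α hα z hz hm
end

section
/- For any partition C of {1,...,n}, the sum over all z ∈ ℕ^n inducing partition C of ∏_{k=1}^{m(z)} α/(g_k(z)+α) equals α^{|C|} / ∏_{c ∈ C} |c|, where m(z) = max_i z_i and g_k(z) = #{i : z_i ≥ k}. -/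
/-!
Label the blocks of `C` by the common value of `z` on them: this identifies the `z` inducing `C`
with the injective labellings `f` of the blocks by positive integers, and `g_k(z)` becomes the
total size `W_k` of the blocks labelled `≥ k`. Split off the block `b` with the smallest label `d`.
The first `d` levels all see the total size `W = n`, and the remaining levels are those of the
labelling `f - d` of the other blocks, so the product factors as `(α / (W + α)) ^ d` times the
product for the smaller partition. Summing the geometric series over `d ≥ 1` gives `α / W`, and
by induction on the number of blocks the sum is
`∑_b (α / W) · α ^ (N - 1) / ∏_{c ≠ b} |c| = α ^ N / ∏_c |c|`, because `∑_b |b| = W`.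

The induction runs over labellings of an arbitrary finite type with positive weights (the block
sizes), in `ℝ≥0∞`, where sums can be rearranged without summability side conditions.
-/

open Finset Function
open scoped ENNReal

noncomputable def levelProd {ι : Type*} [Fintype ι] (a : ℝ≥0∞) (w : ι → ℝ≥0∞) (f : ι → ℕ) :
    ℝ≥0∞ :=
  ∏ k ∈ Icc 1 (univ.sup f), a / (∑ i with k ≤ f i, w i + a)

abbrev DistinctPosLabels (ι : Type*) := {f : ι → ℕ // Injective f ∧ ∀ i, 1 ≤ f i}

lemma ENNReal.tsum_pnat_pow_div_add (a W : ℝ≥0∞) (ha : a ≠ ⊤) (hW : W ≠ 0) (hW' : W ≠ ⊤) :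
    ∑' d : ℕ+, (a / (W + a)) ^ (d : ℕ) = a / W := by
  have hWa : W + a ≠ 0 := by simp [hW]
  have hWa' : W + a ≠ ⊤ := ENNReal.add_ne_top.2 ⟨hW', ha⟩
  have hsub : 1 - a / (W + a) = W / (W + a) := by
    refine ENNReal.sub_eq_of_eq_add (ENNReal.div_ne_top ha hWa) ?_
    rw [ENNReal.div_add_div_same, ENNReal.div_self hWa hWa']
  rw [tsum_pnat_eq_tsum_succ (f := fun d => (a / (W + a)) ^ d), ENNReal.tsum_geometric_add_one,
    hsub, ENNReal.inv_div (Or.inl hWa') (Or.inl hWa), ← mul_div_assoc,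
    ENNReal.div_mul_cancel hWa hWa']

section ShiftExtend

variable {ι : Type*} [DecidableEq ι]

def shiftExtend (b : ι) (d : ℕ) (f : {i // i ≠ b} → ℕ) (i : ι) : ℕ :=
  if h : i = b then d else f ⟨i, h⟩ + d

@[simp] lemma shiftExtend_self (b : ι) (d : ℕ) (f : {i // i ≠ b} → ℕ) :
    shiftExtend b d f b = d := by
  simp [shiftExtend]

@[simp] lemma shiftExtend_coe {b : ι} (d : ℕ) (f : {i // i ≠ b} → ℕ) (i : {i // i ≠ b}) :
    shiftExtend b d f i = f i + d := by
  simp [shiftExtend, i.2]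

lemma lt_shiftExtend {b : ι} (d : ℕ) {f : {i // i ≠ b} → ℕ} (hf : ∀ i, 1 ≤ f i) {i : ι}
    (hi : i ≠ b) : d < shiftExtend b d f i := by
  have := hf ⟨i, hi⟩
  simp only [shiftExtend, hi, dite_false]
  omega

lemma shiftExtend_injective {b : ι} (d : ℕ) {f : {i // i ≠ b} → ℕ} (hf : Injective f)
    (hf1 : ∀ i, 1 ≤ f i) : Injective (shiftExtend b d f) := by
  intro i j hij
  by_cases hi : i = b <;> by_cases hj : j = b
  · rw [hi, hj]
  · subst hi
    exact absurd hij (by simpa using (lt_shiftExtend d hf1 hj).ne)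
  · subst hj
    exact absurd hij (by simpa using (lt_shiftExtend d hf1 hi).ne')
  · have : f ⟨i, hi⟩ = f ⟨j, hj⟩ := by simpa [shiftExtend, hi, hj] using hij
    exact congrArg Subtype.val (hf this)

def shiftExtendLabels (t : Σ b : ι, ℕ+ × DistinctPosLabels {i // i ≠ b}) :
    DistinctPosLabels ι :=
  ⟨shiftExtend t.1 t.2.1 t.2.2.1, shiftExtend_injective _ t.2.2.2.1 t.2.2.2.2, fun i => by
    have hd : 1 ≤ (t.2.1 : ℕ) := t.2.1.2
    by_cases hi : i = t.1
    · simpa [hi] using hd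
    · exact hd.trans (lt_shiftExtend _ t.2.2.2.2 hi).le⟩

lemma shiftExtendLabels_injective : Injective (shiftExtendLabels (ι := ι)) := by
  rintro ⟨b₁, d₁, f₁, _, hf₁⟩ ⟨b₂, d₂, f₂, _, hf₂⟩ h
  have hg : shiftExtend b₁ d₁ f₁ = shiftExtend b₂ d₂ f₂ := congrArg Subtype.val h
  obtain rfl : b₁ = b₂ := by
    by_contra hb
    have h₁ := lt_shiftExtend d₂ hf₂ hb
    have h₂ := lt_shiftExtend d₁ hf₁ (Ne.symm hb)
    rw [← hg, shiftExtend_self] at h₁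
    rw [hg, shiftExtend_self] at h₂
    exact lt_asymm h₁ h₂
  obtain rfl : d₁ = d₂ := PNat.coe_injective (by simpa using congrFun hg b₁)
  obtain rfl : f₁ = f₂ := funext fun i => by simpa using congrFun hg i
  rfl

variable [Fintype ι]

lemma sup_shiftExtend (b : ι) (d : ℕ) (f : {i // i ≠ b} → ℕ) :
    univ.sup (shiftExtend b d f) = univ.sup f + d := by
  refine le_antisymm (Finset.sup_le fun i _ => ?_) ?_
  · by_cases h : i = b
    · simp [h]
    · simpa [shiftExtend, h] using le_sup (f := f) (mem_univ ⟨i, h⟩)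
  · rcases isEmpty_or_nonempty {i // i ≠ b} with hE | hNe
    · simpa using le_sup (f := shiftExtend b d f) (mem_univ b)
    · obtain ⟨i, -, hi⟩ := exists_mem_eq_sup univ univ_nonempty f
      simpa [hi] using le_sup (f := shiftExtend b d f) (mem_univ (i : ι))

lemma sum_filter_le_shiftExtend_of_le {M : Type*} [AddCommMonoid M] (w : ι → M) (b : ι) {d k : ℕ}
    (f : {i // i ≠ b} → ℕ) (hk : k ≤ d) :
    ∑ i with k ≤ shiftExtend b d f i, w i = ∑ i, w i := by
  refine sum_congr (filter_true_of_mem fun i _ => ?_) fun _ _ => rfl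
  by_cases h : i = b
  · simpa [h] using hk
  · simpa [h, shiftExtend] using le_add_left hk

lemma sum_filter_add_le_shiftExtend {M : Type*} [AddCommMonoid M] (w : ι → M) (b : ι) {d k : ℕ}
    (f : {i // i ≠ b} → ℕ) (hk : 0 < k) :
    ∑ i with d + k ≤ shiftExtend b d f i, w i = ∑ i with k ≤ f i, w i := by
  rw [sum_filter, sum_filter, Fintype.sum_eq_add_sum_subtype_ne _ b]
  simp only [shiftExtend_self, shiftExtend_coe]
  rw [if_neg (by omega), zero_add]
  exact sum_congr rfl fun i _ => by simp only [show d + k ≤ f i + d ↔ k ≤ f i by omega]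

lemma levelProd_shiftExtend (a : ℝ≥0∞) (w : ι → ℝ≥0∞) (b : ι) (d : ℕ) (f : {i // i ≠ b} → ℕ) :
    levelProd a w (shiftExtend b d f)
      = (a / (∑ i, w i + a)) ^ d * levelProd a (fun i : {i // i ≠ b} => w i) f := by
  have hIcc (m : ℕ) : Icc 1 m = Ioc 0 m := rfl
  simp only [levelProd, hIcc]
  rw [sup_shiftExtend, add_comm _ d,
    ← prod_Ioc_consecutive _ (Nat.zero_le d) (Nat.le_add_right d _)]
  congr 1
  · rw [prod_congr rfl fun k hk => by rw [sum_filter_le_shiftExtend_of_le w b f (mem_Ioc.1 hk).2],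
      prod_const, Nat.card_Ioc, Nat.sub_zero]
  · have hshift := map_add_left_Ioc 0 (univ.sup f) d
    rw [add_zero] at hshift
    rw [← hshift, prod_map]
    exact prod_congr rfl fun k hk => by
      rw [addLeftEmbedding_apply, sum_filter_add_le_shiftExtend w b f (mem_Ioc.1 hk).1]

lemma shiftExtendLabels_surjective [Nonempty ι] :
    Surjective (shiftExtendLabels (ι := ι)) := by
  rintro ⟨g, hg, hg₁⟩
  obtain ⟨b, -, hb⟩ := exists_min_image univ g univ_nonempty
  have hlt (i : {i // i ≠ b}) : g b < g i := (hb i (mem_univ _)).lt_of_ne (hg.ne i.2.symm)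
  refine ⟨⟨b, ⟨g b, hg₁ b⟩, fun i => g i - g b, fun i j hij => ?_, fun i => ?_⟩, ?_⟩
  · have := hlt i
    have := hlt j
    exact Subtype.ext (hg (by simp only at hij; omega))
  · have := hlt i
    simp only
    omega
  · refine Subtype.ext (funext fun i => ?_)
    by_cases hi : i = b
    · simp [shiftExtendLabels, hi]
    · have : g b < g i := hlt ⟨i, hi⟩
      simp only [shiftExtendLabels, shiftExtend, dif_neg hi]
      show g i - g b + g b = g i
      omega

end ShiftExtend

lemma ENNReal.div_prod_subtype_ne {ι : Type*} [Fintype ι] [DecidableEq ι] (x : ℝ≥0∞)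
    {w : ι → ℝ≥0∞} (b : ι) (hb : w b ≠ 0) (hb' : w b ≠ ⊤) :
    x / ∏ i : {i // i ≠ b}, w i = w b * (x / ∏ i, w i) := by
  rw [Fintype.prod_eq_mul_prod_subtype_ne w b, ← ENNReal.mul_div_mul_left _ _ hb hb',
    mul_div_assoc]

lemma tsum_distinctPosLabels_eq_sum_shiftExtend {ι : Type*} [Fintype ι] [DecidableEq ι]
    [Nonempty ι] (F : (ι → ℕ) → ℝ≥0∞) :
    ∑' f : DistinctPosLabels ι, F f.1
      = ∑ b, ∑' (d : ℕ+) (f : DistinctPosLabels {i // i ≠ b}), F (shiftExtend b d f.1) := by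
  rw [← (Equiv.ofBijective _ ⟨shiftExtendLabels_injective, shiftExtendLabels_surjective⟩).tsum_eq,
    ENNReal.tsum_sigma', tsum_fintype]
  exact sum_congr rfl fun b _ => ENNReal.tsum_prod'

theorem tsum_levelProd {ι : Type*} [Fintype ι] (a : ℝ≥0∞) (ha : a ≠ ⊤) (w : ι → ℝ≥0∞)
    (hw : ∀ i, w i ≠ 0) (hw' : ∀ i, w i ≠ ⊤) :
    ∑' f : DistinctPosLabels ι, levelProd a w f.1 = a ^ Fintype.card ι / ∏ i, w i := by
  induction hN : Fintype.card ι generalizing ι with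
  | zero =>
    have : IsEmpty ι := Fintype.card_eq_zero_iff.1 hN
    let f₀ : DistinctPosLabels ι := ⟨isEmptyElim, fun i => isEmptyElim i, isEmptyElim⟩
    rw [tsum_eq_single f₀ fun f hf => (hf (Subtype.ext (funext isEmptyElim))).elim]
    simp [levelProd]
  | succ N ih =>
    classical
    have : Nonempty ι := Fintype.card_pos_iff.1 (by omega)
    set W := ∑ i, w i
    have hW : W ≠ 0 := by
      obtain ⟨i₀⟩ := ‹Nonempty ι›
      simpa [W] using ⟨i₀, hw i₀⟩
    have hW' : W ≠ ⊤ := ENNReal.sum_ne_top.2 fun i _ => hw' i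
    have hcard (b : ι) : Fintype.card {i // i ≠ b} = N := by simp [hN]
    calc ∑' f : DistinctPosLabels ι, levelProd a w f.1
        = ∑ b : ι, (∑' d : ℕ+, (a / (W + a)) ^ (d : ℕ))
            * ∑' f : DistinctPosLabels {i // i ≠ b},
                levelProd a (fun i : {i // i ≠ b} => w i) f.1 := by
          simp_rw [tsum_distinctPosLabels_eq_sum_shiftExtend, levelProd_shiftExtend,
            ENNReal.tsum_mul_left, ENNReal.tsum_mul_right]
          rfl
      _ = ∑ b, w b * (a / W * (a ^ N / ∏ i, w i)) := by
          refine sum_congr rfl fun b _ => ?_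
          rw [ENNReal.tsum_pnat_pow_div_add a W ha hW hW',
            ih (fun i : {i // i ≠ b} => w i) (fun i => hw i) (fun i => hw' i) (hcard b),
            ENNReal.div_prod_subtype_ne _ _ (hw b) (hw' b), mul_left_comm]
      _ = a ^ (N + 1) / ∏ i, w i := by
          rw [← sum_mul, ← mul_assoc, ENNReal.mul_div_cancel hW hW', ← mul_div_assoc, pow_succ']

noncomputable def labelsCompEquiv {α β : Type*} (π : α → β) (hπ : Surjective π) :
    DistinctPosLabels β ≃ {z : α → ℕ // (∀ j, 1 ≤ z j) ∧ ∀ p q, z p = z q ↔ π p = π q} where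
  toFun f := ⟨f.1 ∘ π, fun j => f.2.2 (π j), fun _ _ => f.2.1.eq_iff⟩
  invFun z := ⟨z.1 ∘ surjInv hπ, fun b b' h => by
      simpa [surjInv_eq hπ] using (z.2.2 _ _).1 h, fun b => z.2.1 _⟩
  left_inv f := Subtype.ext (funext fun b => congrArg f.1 (surjInv_eq hπ b))
  right_inv z := Subtype.ext (funext fun p => (z.2.2 _ _).2 (surjInv_eq hπ (π p)))

lemma levelProd_comp {α β : Type*} [Fintype α] [Fintype β] [DecidableEq β] (a : ℝ≥0∞)
    (v : α → ℝ≥0∞) {π : α → β} (hπ : Surjective π) (f : β → ℕ) :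
    levelProd a v (f ∘ π) = levelProd a (fun b => ∑ x with π x = b, v x) f := by
  have hsup : univ.sup (f ∘ π) = univ.sup f := by
    rw [← sup_image, image_univ_of_surjective hπ]
  simp only [levelProd, hsup]
  refine prod_congr rfl fun k _ => ?_
  rw [sum_fiberwise_eq_sum_filter]
  simp

namespace Finpartition

variable {α : Type*} [Fintype α] [DecidableEq α] (P : Finpartition (univ : Finset α))

def partOf (x : α) : P.parts := ⟨P.part x, P.part_mem.2 (mem_univ x)⟩

lemma partOf_surjective : Surjective P.partOf := fun c => by
  obtain ⟨x, -, hx⟩ := P.part_surjOn c.2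
  exact ⟨x, Subtype.ext hx⟩

lemma partOf_eq_partOf_iff {p q : α} :
    P.partOf p = P.partOf q ↔ ∃ c ∈ P.parts, p ∈ c ∧ q ∈ c := by
  rw [← mem_part_iff_exists, P.mem_part_iff_part_eq_part (mem_univ p) (mem_univ q), partOf,
    partOf, Subtype.mk.injEq]

lemma card_filter_partOf_eq (c : P.parts) : #{x | P.partOf x = c} = #c.1 := by
  congr 1
  ext x
  simp [partOf, Subtype.ext_iff, P.part_eq_iff_mem c.2]

end Finpartition

theorem tsum_levelProd_finpartition {α : Type*} [Fintype α] [DecidableEq α]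
    (P : Finpartition (univ : Finset α)) (a : ℝ≥0∞) (ha : a ≠ ⊤) :
    ∑' z : {z : α → ℕ // (∀ j, 1 ≤ z j) ∧ ∀ p q, z p = z q ↔ ∃ c ∈ P.parts, p ∈ c ∧ q ∈ c},
      levelProd a 1 z.1 = a ^ #P.parts / ∏ c ∈ P.parts, (#c : ℝ≥0∞) := by
  let e := (labelsCompEquiv P.partOf P.partOf_surjective).trans
    (Equiv.subtypeEquivRight (q := fun z : α → ℕ =>
      (∀ j, 1 ≤ z j) ∧ ∀ p q, z p = z q ↔ ∃ c ∈ P.parts, p ∈ c ∧ q ∈ c)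
      fun z => by simp only [P.partOf_eq_partOf_iff])
  rw [← e.tsum_eq]
  simp_rw [show ∀ f, (e f).1 = f.1 ∘ P.partOf from fun _ => rfl,
    levelProd_comp a 1 P.partOf_surjective, Pi.one_apply, sum_const, nsmul_one,
    P.card_filter_partOf_eq]
  rw [tsum_levelProd a ha _ (fun c => by simpa using (P.nonempty_of_mem_parts c.2).ne_empty)
    (fun c => ENNReal.natCast_ne_top _), Fintype.card_coe,
    prod_coe_sort P.parts fun c => (#c : ℝ≥0∞)]

lemma levelProd_ne_top {ι : Type*} [Fintype ι] {a : ℝ≥0∞} (ha : a ≠ 0) (ha' : a ≠ ⊤)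
    (w : ι → ℝ≥0∞) (f : ι → ℕ) : levelProd a w f ≠ ⊤ :=
  ENNReal.prod_ne_top fun _ _ => ENNReal.div_ne_top ha' (by simp [ha])

lemma toReal_levelProd_ofReal_one {ι : Type*} [Fintype ι] {α : ℝ} (hα : 0 ≤ α) (f : ι → ℕ) :
    (levelProd (ENNReal.ofReal α) 1 f).toReal
      = ∏ k ∈ Icc 1 (univ.sup f), α / (#{i | k ≤ f i} + α) := by
  simp only [levelProd, Pi.one_apply, sum_const, nsmul_one, ENNReal.toReal_prod]
  refine prod_congr rfl fun k _ => ?_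
  rw [ENNReal.toReal_div, ENNReal.toReal_add (ENNReal.natCast_ne_top _) ENNReal.ofReal_ne_top,
    ENNReal.toReal_natCast, ENNReal.toReal_ofReal hα]

theorem stmt6_general (n : ℕ) (α : ℝ) (hα : 0 < α)
    (C : Finset (Finset (Fin n)))
    (hne : ∀ c ∈ C, c.Nonempty)
    (hdisj : ∀ c ∈ C, ∀ c' ∈ C, c ≠ c' → Disjoint c c')
    (hcover : ∀ p : Fin n, ∃ c ∈ C, p ∈ c) :
    ∑' z : {z : Fin n → ℕ // (∀ j, 1 ≤ z j) ∧
        ∀ p q : Fin n, z p = z q ↔ ∃ c ∈ C, p ∈ c ∧ q ∈ c},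
      ∏ k ∈ Finset.Icc 1 (Finset.univ.sup z.1),
        (α / ((Finset.univ.filter (fun i => k ≤ z.1 i)).card + α))
      = α ^ C.card / ∏ c ∈ C, (c.card : ℝ) := by
  let P : Finpartition (univ : Finset (Fin n)) :=
    Finpartition.ofExistsUnique C (fun _ _ => subset_univ _)
      (fun p _ => by
        obtain ⟨c, hc, hp⟩ := hcover p
        refine ⟨c, ⟨hc, hp⟩, fun c' ⟨hc', hp'⟩ => by_contra fun h => ?_⟩
        exact disjoint_left.1 (hdisj c' hc' c hc h) hp' hp)
      (fun h => by simpa using hne ∅ h)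
  have hα₀ : ENNReal.ofReal α ≠ 0 := (ENNReal.ofReal_pos.2 hα).ne'
  calc _ = ∑' z : {z : Fin n → ℕ // (∀ j, 1 ≤ z j) ∧
        ∀ p q : Fin n, z p = z q ↔ ∃ c ∈ P.parts, p ∈ c ∧ q ∈ c},
        (levelProd (ENNReal.ofReal α) 1 z.1).toReal :=
        tsum_congr fun z => (toReal_levelProd_ofReal_one hα.le z.1).symm
    _ = _ := by
      rw [← ENNReal.tsum_toReal_eq fun z => levelProd_ne_top hα₀ ENNReal.ofReal_ne_top _ _,
        tsum_levelProd_finpartition P _ ENNReal.ofReal_ne_top]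
      simp [ENNReal.toReal_prod, hα.le, P]

/-- Lemma B: for any partition `C` of `{1,...,n}`, the sum over all `z ∈ {1,2,...}^n`
inducing the partition `C` of `∏_{k=1}^{m(z)} α/(g_k(z)+α)` equals `α^{|C|} / ∏_{c ∈ C} |c|`,
where `m(z) = max_i z_i` and `g_k(z) = #{i : z_i ≥ k}`. -/
theorem stmt6 (n : ℕ) (hn : 1 ≤ n) (α : ℝ) (hα : 0 < α)
    (C : Finset (Finset (Fin n)))
    (hne : ∀ c ∈ C, c.Nonempty)
    (hdisj : ∀ c ∈ C, ∀ c' ∈ C, c ≠ c' → Disjoint c c')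
    (hcover : ∀ p : Fin n, ∃ c ∈ C, p ∈ c) :
    ∑' z : {z : Fin n → ℕ // (∀ j, 1 ≤ z j) ∧
        ∀ p q : Fin n, z p = z q ↔ ∃ c ∈ C, p ∈ c ∧ q ∈ c},
      ∏ k ∈ Finset.Icc 1 (Finset.univ.sup z.1),
        (α / ((Finset.univ.filter (fun i => k ≤ z.1 i)).card + α))
      = α ^ C.card / ∏ c ∈ C, (c.card : ℝ) :=
  stmt6_general n α hα C hne hdisj hcover
end

section
/- The Pólya urn sequence is a Beta mixture of i.i.d. Bernoullis: for any binary sequence (y_1,...,y_n) with y_1 = 1 and s = Σ y_i, one has (∏ of urn conditional probabilities) = ∫_0^1 v^{s-1}(1-v)^{n-s} · α(1-v)^{α-1} dv, i.e., the urn probability equals the probability of the same sequence under v ~ Beta(1,α), y_1 = 1, and y_2,...,y_n | v i.i.d. Bernoulli(v). -/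
/-!
Both sides equal `α * B(s, n - s + α)`. For the integral this is Euler's Beta integral once the
two powers of `1 - v` are merged. For the urn product, induct on `n`: appending draw `n + 1`
multiplies the product by `s / (α + n)` or by `(n - s + α) / (α + n)`, which is how
`B(s, n - s + α)` changes when `s` or `n - s` grows by one, by `Γ(x + 1) = x Γ(x)`.
-/

open Finset ProbabilityTheory

theorem integral_rpow_mul_one_sub_rpow_eq_beta {a b : ℝ} (ha : 0 < a) (hb : 0 < b) :
    ∫ x in (0:ℝ)..1, x ^ (a - 1) * (1 - x) ^ (b - 1) = beta a b := by
  have hC : ((∫ x in (0:ℝ)..1, x ^ (a - 1) * (1 - x) ^ (b - 1) : ℝ) : ℂ)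
      = Complex.betaIntegral a b := by
    rw [← intervalIntegral.integral_ofReal, Complex.betaIntegral]
    refine intervalIntegral.integral_congr fun x hx => ?_
    rw [Set.uIcc_of_le zero_le_one] at hx
    push_cast
    rw [Complex.ofReal_cpow hx.1, Complex.ofReal_cpow (sub_nonneg.2 hx.2)]
    push_cast
    ring
  rw [beta_eq_betaIntegralReal a b ha hb, ← hC, Complex.ofReal_re]

theorem integral_pow_mul_one_sub_pow_mul_rpow_eq_beta {a : ℝ} (ha : 0 < a) (k m : ℕ) :
    ∫ x in (0:ℝ)..1, x ^ k * (1 - x) ^ m * (1 - x) ^ (a - 1) = beta (k + 1) (m + a) := by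
  rw [← integral_rpow_mul_one_sub_rpow_eq_beta (by positivity) (by positivity)]
  refine intervalIntegral.integral_congr_ae ((MeasureTheory.Measure.ae_ne _ 1).mono fun x hx1 hx => ?_)
  rw [Set.uIoc_of_le zero_le_one] at hx
  have hx : 0 < 1 - x := sub_pos.2 (lt_of_le_of_ne hx.2 hx1)
  rw [add_sub_cancel_right, Real.rpow_natCast, add_sub_assoc, Real.rpow_add hx,
    Real.rpow_natCast, mul_assoc]

theorem beta_one_left {b : ℝ} (hb : 0 < b) : beta 1 b = 1 / b := by
  rw [beta, Real.Gamma_one, add_comm, Real.Gamma_add_one hb.ne']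
  have := (Real.Gamma_pos_of_pos hb).ne'
  field_simp

theorem beta_add_one_left {a b : ℝ} (ha : 0 < a) (hb : 0 < b) :
    beta (a + 1) b = a / (a + b) * beta a b := by
  rw [beta, beta, add_right_comm, Real.Gamma_add_one ha.ne',
    Real.Gamma_add_one (add_pos ha hb).ne']
  have := (Real.Gamma_pos_of_pos (add_pos ha hb)).ne'
  field_simp

theorem beta_add_one_right {a b : ℝ} (ha : 0 < a) (hb : 0 < b) :
    beta a (b + 1) = b / (a + b) * beta a b := by
  rw [beta, beta, ← add_assoc, Real.Gamma_add_one hb.ne',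
    Real.Gamma_add_one (add_pos ha hb).ne']
  have := (Real.Gamma_pos_of_pos (add_pos ha hb)).ne'
  field_simp

noncomputable def polyaUrnProb (α : ℝ) (y : ℕ → ℕ) (n : ℕ) : ℝ :=
  ∏ i ∈ Icc 2 n,
    (if y i = 1 then ((∑ j ∈ Ico 1 i, y j : ℕ) : ℝ) / (α + i - 1)
     else 1 - ((∑ j ∈ Ico 1 i, y j : ℕ) : ℝ) / (α + i - 1))

theorem polyaUrnProb_succ (α : ℝ) (y : ℕ → ℕ) {n : ℕ} (hn : 1 ≤ n) :
    polyaUrnProb α y (n + 1) = polyaUrnProb α y n *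
      (if y (n + 1) = 1 then ((∑ j ∈ Icc 1 n, y j : ℕ) : ℝ) / (α + n)
       else 1 - ((∑ j ∈ Icc 1 n, y j : ℕ) : ℝ) / (α + n)) := by
  rw [polyaUrnProb, polyaUrnProb, prod_Icc_succ_top (by omega), Ico_add_one_right_eq_Icc,
    Nat.cast_succ, ← add_assoc, add_sub_cancel_right]

theorem one_le_sum_Icc_of_apply_one_eq_one {y : ℕ → ℕ} (hy1 : y 1 = 1) {n : ℕ} (hn : 1 ≤ n) :
    1 ≤ ∑ i ∈ Icc 1 n, y i :=
  hy1.ge.trans <| single_le_sum (fun i _ => Nat.zero_le (y i)) (left_mem_Icc.2 hn)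

theorem sum_Icc_le_of_le_one {y : ℕ → ℕ} {n : ℕ} (hy : ∀ i ∈ Icc 1 n, y i ≤ 1) :
    ∑ i ∈ Icc 1 n, y i ≤ n := by
  simpa using sum_le_sum hy

theorem polyaUrnProb_eq_mul_beta {α : ℝ} (hα : 0 < α) {y : ℕ → ℕ} (hy1 : y 1 = 1) {n : ℕ}
    (hn : 1 ≤ n) (hy : ∀ i ∈ Icc 1 n, y i ≤ 1) :
    polyaUrnProb α y n =
      α * beta (∑ i ∈ Icc 1 n, y i : ℕ) ((n - ∑ i ∈ Icc 1 n, y i : ℕ) + α) := by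
  induction n, hn using Nat.le_induction with
  | base => simp [polyaUrnProb, hy1, beta_one_left hα, hα.ne']
  | succ n hn ih =>
    have hy' : ∀ i ∈ Icc 1 n, y i ≤ 1 := fun i hi => hy i (Icc_subset_Icc_right n.le_succ hi)
    have hs1 := one_le_sum_Icc_of_apply_one_eq_one hy1 hn
    have hsn := sum_Icc_le_of_le_one hy'
    rw [polyaUrnProb_succ α y hn, ih hy', sum_Icc_succ_top (by omega)]
    set s := ∑ i ∈ Icc 1 n, y i
    have hαn : (α + n) = s + ((n - s : ℕ) + α) := by push_cast [Nat.cast_sub hsn]; ring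
    have hs : (0 : ℝ) < s := by exact_mod_cast hs1
    rcases Nat.le_one_iff_eq_zero_or_eq_one.1 (hy (n + 1) (by simp)) with h | h
    · rw [h, if_neg zero_ne_one, add_zero, Nat.sub_add_comm hsn, Nat.cast_succ, add_right_comm,
        beta_add_one_right hs (by positivity), hαn]
      field_simp
      ring
    · rw [h, if_pos rfl, Nat.add_sub_add_right, Nat.cast_succ,
        beta_add_one_left hs (by positivity), hαn]
      ring

/-- The Pólya urn sequence is a Beta mixture of i.i.d. Bernoullis: for a binary sequence
`(y 1, ..., y n)` with `y 1 = 1` and `s = ∑ y i`, the product of the urn conditional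
probabilities equals `∫_0^1 v^{s-1} (1-v)^{n-s} · α(1-v)^{α-1} dv`, the probability of the
same sequence when `v ~ Beta(1,α)`, `y 1 = 1`, and `y 2, ..., y n | v` are i.i.d.
`Bernoulli(v)`. -/
theorem stmt10 (α : ℝ) (hα : 0 < α) (n : ℕ) (hn : 1 ≤ n)
    (y : ℕ → ℕ) (hy1 : y 1 = 1) (hybin : ∀ i ∈ Finset.Icc 1 n, y i ≤ 1) :
    (∏ i ∈ Finset.Icc 2 n,
        (if y i = 1 then ((∑ j ∈ Finset.Ico 1 i, y j : ℕ) : ℝ) / (α + i - 1)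
         else 1 - ((∑ j ∈ Finset.Ico 1 i, y j : ℕ) : ℝ) / (α + i - 1)))
      = ∫ v in (0:ℝ)..1,
          v ^ ((∑ i ∈ Finset.Icc 1 n, y i) - 1) *
            (1 - v) ^ (n - ∑ i ∈ Finset.Icc 1 n, y i) * (α * (1 - v) ^ (α - 1)) := by
  have hs1 := one_le_sum_Icc_of_apply_one_eq_one hy1 hn
  change polyaUrnProb α y n = _
  simp_rw [mul_left_comm _ α]
  rw [intervalIntegral.integral_const_mul, integral_pow_mul_one_sub_pow_mul_rpow_eq_beta hα,
    polyaUrnProb_eq_mul_beta hα hy1 hn hybin, ← Nat.cast_add_one, Nat.sub_add_cancel hs1]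
end

section
/- The Ewens/CRP formula defines a probability distribution: for α > 0 and n ≥ 1, the sum over all partitions C of {1,...,n} of α^{|C|} Γ(α)/Γ(n+α) · ∏_{c ∈ C} Γ(|c|) equals 1. -/
/-! A partition of `insert a s` is the same as a partition `D` of `s` together with a choice of
where `a` goes: into a new block, which multiplies `x ^ #D ∏ (#c - 1)!` by `x`, or into a block
`c ∈ D`, which multiplies it by `#c`. As `∑ c ∈ D, #c = #s`, summing over the choices multiplies
the weight of `D` by `x + #s`. Hence the weights of the partitions of an `n`-set add up to the
rising factorial `x (x + 1) ⋯ (x + n - 1) = Γ(n + x) / Γ(x)`. -/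

open Finset Nat

theorem Real.Gamma_natCast_add_eq_mul_prod {x : ℝ} (hx : 0 < x) (n : ℕ) :
    Real.Gamma (n + x) = Real.Gamma x * ∏ k ∈ range n, (x + k) := by
  induction n with
  | zero => simp
  | succ n ih =>
    rw [cast_succ, add_right_comm, Real.Gamma_add_one (by positivity), ih, prod_range_succ]
    ring

theorem Real.Gamma_natCast_eq_factorial_pred {n : ℕ} (hn : n ≠ 0) : Real.Gamma n = (n - 1)! := by
  obtain ⟨k, rfl⟩ := exists_eq_succ_of_ne_zero hn
  simpa using Real.Gamma_nat_eq_factorial k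

namespace Ewens

variable {X : Type*}

structure IsSetPartition (s : Finset X) (C : Finset (Finset X)) : Prop where
  nonempty : ∀ c ∈ C, c.Nonempty
  disjoint : ∀ c ∈ C, ∀ c' ∈ C, c ≠ c' → Disjoint c c'
  cover : ∀ p ∈ s, ∃ c ∈ C, p ∈ c
  subset : ∀ c ∈ C, c ⊆ s

def ewensWeight {R : Type*} [CommSemiring R] (x : R) (C : Finset (Finset X)) : R :=
  x ^ #C * ∏ c ∈ C, ((#c - 1)! : R)

namespace IsSetPartition

variable {s : Finset X} {C : Finset (Finset X)}

theorem empty_notMem (hC : IsSetPartition s C) : (∅ : Finset X) ∉ C :=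
  fun h => not_nonempty_empty (hC.nonempty ∅ h)

theorem sum_card [DecidableEq X] (hC : IsSetPartition s C) : ∑ c ∈ C, #c = #s := by
  have hs : C.biUnion id = s := by
    ext p
    simp only [mem_biUnion, id]
    exact ⟨fun ⟨c, hc, hpc⟩ => hC.subset c hc hpc, hC.cover p⟩
  rw [← hs, card_biUnion (t := id) fun c hc c' hc' h => hC.disjoint c hc c' hc' h]
  rfl

end IsSetPartition

theorem isSetPartition_empty_iff {C : Finset (Finset X)} : IsSetPartition ∅ C ↔ C = ∅ := by
  refine ⟨fun hC => eq_empty_of_forall_notMem fun c hc => ?_, ?_⟩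
  · obtain ⟨p, hp⟩ := hC.nonempty c hc
    exact notMem_empty p (hC.subset c hc hp)
  · rintro rfl
    exact ⟨by simp, by simp, by simp, by simp⟩

variable [DecidableEq X]

/-- `c = ∅` means that `a` opens a new block, so the places where `a` can go form `insert ∅ D`. -/
def insertIntoBlock (a : X) (c : Finset X) (D : Finset (Finset X)) : Finset (Finset X) :=
  if c = ∅ then insert {a} D else insert (insert a c) (D.erase c)

def eraseFromBlocks (a : X) (C : Finset (Finset X)) : Finset (Finset X) :=
  (C.image (·.erase a)).erase ∅

def blockMates (a : X) (C : Finset (Finset X)) : Finset X :=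
  ((C.filter (a ∈ ·)).biUnion id).erase a

section block

variable {a : X} {C : Finset (Finset X)} {b : Finset X}

theorem filter_mem_eq_singleton (hdis : ∀ c ∈ C, ∀ c' ∈ C, c ≠ c' → Disjoint c c')
    (hb : b ∈ C) (hab : a ∈ b) : C.filter (a ∈ ·) = {b} := by
  ext c
  simp only [mem_filter, mem_singleton]
  refine ⟨fun ⟨hc, hac⟩ => ?_, by rintro rfl; exact ⟨hb, hab⟩⟩
  by_contra h
  exact disjoint_left.mp (hdis c hc b hb h) hac hab

theorem blockMates_eq (hdis : ∀ c ∈ C, ∀ c' ∈ C, c ≠ c' → Disjoint c c')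
    (hb : b ∈ C) (hab : a ∈ b) : blockMates a C = b.erase a := by
  rw [blockMates, filter_mem_eq_singleton hdis hb hab, singleton_biUnion, id]

theorem image_erase_eq (hdis : ∀ c ∈ C, ∀ c' ∈ C, c ≠ c' → Disjoint c c')
    (hb : b ∈ C) (hab : a ∈ b) :
    C.image (·.erase a) = insert (b.erase a) (C.erase b) := by
  nth_rewrite 1 [← insert_erase hb]
  rw [image_insert]
  congr 1
  refine (image_congr fun c hc => erase_eq_of_notMem fun hac => ?_).trans image_id
  exact disjoint_left.mp (hdis c (mem_of_mem_erase hc) b hb (ne_of_mem_erase hc)) hac hab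

end block

theorem mem_eraseFromBlocks {a : X} {C : Finset (Finset X)} {d : Finset X} :
    d ∈ eraseFromBlocks a C ↔ d ≠ ∅ ∧ ∃ c ∈ C, c.erase a = d := by
  simp [eraseFromBlocks]

variable {a : X} {s : Finset X}

namespace IsSetPartition

theorem eraseFromBlocks (ha : a ∉ s) {C : Finset (Finset X)}
    (hC : IsSetPartition (insert a s) C) : IsSetPartition s (eraseFromBlocks a C) where
  nonempty d hd := nonempty_iff_ne_empty.mpr (mem_eraseFromBlocks.mp hd).1
  disjoint d hd d' hd' hdd' := by
    obtain ⟨-, c, hc, rfl⟩ := mem_eraseFromBlocks.mp hd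
    obtain ⟨-, c', hc', rfl⟩ := mem_eraseFromBlocks.mp hd'
    exact (hC.disjoint c hc c' hc' (by rintro rfl; exact hdd' rfl)).mono
      (erase_subset a c) (erase_subset a c')
  cover p hp := by
    obtain ⟨c, hc, hpc⟩ := hC.cover p (mem_insert_of_mem hp)
    have hp' : p ∈ c.erase a := mem_erase.mpr ⟨by rintro rfl; exact ha hp, hpc⟩
    exact ⟨c.erase a, mem_eraseFromBlocks.mpr ⟨ne_empty_of_mem hp', c, hc, rfl⟩, hp'⟩
  subset d hd := by
    obtain ⟨-, c, hc, rfl⟩ := mem_eraseFromBlocks.mp hd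
    intro p hp
    exact (mem_insert.mp (hC.subset c hc (mem_of_mem_erase hp))).resolve_left (ne_of_mem_erase hp)

theorem blockMates_mem {C : Finset (Finset X)} (hC : IsSetPartition (insert a s) C) :
    blockMates a C ∈ insert ∅ (Ewens.eraseFromBlocks a C) := by
  obtain ⟨b, hb, hab⟩ := hC.cover a (mem_insert_self a s)
  rw [blockMates_eq hC.disjoint hb hab, mem_insert, mem_eraseFromBlocks]
  by_cases h : b.erase a = ∅
  · exact .inl h
  · exact .inr ⟨h, b, hb, rfl⟩

theorem insertIntoBlock_blockMates {C : Finset (Finset X)} (hC : IsSetPartition (insert a s) C) :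
    insertIntoBlock a (blockMates a C) (Ewens.eraseFromBlocks a C) = C := by
  obtain ⟨b, hb, hab⟩ := hC.cover a (mem_insert_self a s)
  rw [blockMates_eq hC.disjoint hb hab, Ewens.eraseFromBlocks, image_erase_eq hC.disjoint hb hab,
    insertIntoBlock]
  have hemp : ∅ ∉ C.erase b := fun h => hC.empty_notMem (mem_of_mem_erase h)
  split_ifs with h
  · have hba : b = {a} := ((erase_eq_empty_iff b a).mp h).resolve_left (hC.nonempty b hb).ne_empty
    rw [h, erase_insert hemp, ← hba, insert_erase hb]
  · have hb' : b.erase a ∉ C.erase b := fun h' => by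
      obtain ⟨p, hp⟩ := hC.nonempty _ (mem_of_mem_erase h')
      exact disjoint_left.mp (hC.disjoint _ (mem_of_mem_erase h') b hb (ne_of_mem_erase h')) hp
        (mem_of_mem_erase hp)
    rw [erase_insert_of_ne h, erase_eq_of_notMem hemp, insert_erase hab, erase_insert hb',
      insert_erase hb]

theorem insertBlock {C : Finset (Finset X)} (hC : IsSetPartition s C) {b : Finset X}
    (hb : b.Nonempty) (hbs : Disjoint b s) : IsSetPartition (b ∪ s) (insert b C) := by
  have hbC : ∀ c ∈ C, Disjoint b c := fun c hc => hbs.mono_right (hC.subset c hc)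
  refine ⟨?_, ?_, ?_, ?_⟩
  · simpa [hb] using hC.nonempty
  · intro d hd d' hd' hdd'
    rw [mem_insert] at hd hd'
    rcases hd with rfl | hd
    · exact hbC d' (hd'.resolve_left hdd'.symm)
    rcases hd' with rfl | hd'
    · exact (hbC d hd).symm
    exact hC.disjoint d hd d' hd' hdd'
  · intro p hp
    rcases mem_union.mp hp with hp | hp
    · exact ⟨b, mem_insert_self b C, hp⟩
    · obtain ⟨c, hc, hpc⟩ := hC.cover p hp
      exact ⟨c, mem_insert_of_mem hc, hpc⟩
  · simpa using fun c hc => (hC.subset c hc).trans subset_union_right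

theorem eraseBlock {C : Finset (Finset X)} (hC : IsSetPartition s C) {c : Finset X} (hc : c ∈ C) :
    IsSetPartition (s \ c) (C.erase c) where
  nonempty d hd := hC.nonempty d (mem_of_mem_erase hd)
  disjoint d hd d' hd' := hC.disjoint d (mem_of_mem_erase hd) d' (mem_of_mem_erase hd')
  cover p hp := by
    obtain ⟨d, hd, hpd⟩ := hC.cover p (mem_sdiff.mp hp).1
    exact ⟨d, mem_erase.mpr ⟨by rintro rfl; exact (mem_sdiff.mp hp).2 hpd, hd⟩, hpd⟩
  subset d hd := subset_sdiff.mpr ⟨hC.subset d (mem_of_mem_erase hd),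
    hC.disjoint d (mem_of_mem_erase hd) c hc (ne_of_mem_erase hd)⟩

theorem insertIntoBlock (ha : a ∉ s) {D : Finset (Finset X)} (hD : IsSetPartition s D)
    {c : Finset X} (hc : c ∈ insert ∅ D) :
    IsSetPartition (insert a s) (Ewens.insertIntoBlock a c D) := by
  rw [Ewens.insertIntoBlock]
  split_ifs with h
  · simpa using hD.insertBlock (singleton_nonempty a) (disjoint_singleton_left.mpr ha)
  · have hcD := (mem_insert.mp hc).resolve_left h
    have hcs := hD.subset c hcD
    have hcover : insert a c ∪ s \ c = insert a s := by
      rw [insert_union, union_sdiff_of_subset hcs]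
    rw [← hcover]
    refine (hD.eraseBlock hcD).insertBlock (insert_nonempty a c) ?_
    exact disjoint_insert_left.mpr ⟨fun h => ha (mem_sdiff.mp h).1, disjoint_sdiff⟩

theorem eraseFromBlocks_insertIntoBlock (ha : a ∉ s) {D : Finset (Finset X)}
    (hD : IsSetPartition s D) {c : Finset X} (hc : c ∈ insert ∅ D) :
    Ewens.eraseFromBlocks a (Ewens.insertIntoBlock a c D) = D := by
  have haD : ∀ d ∈ D, a ∉ d := fun d hd h => ha (hD.subset d hd h)
  have himage : ∀ E ⊆ D, E.image (·.erase a) = E := fun E hE =>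
    (image_congr fun d hd => erase_eq_of_notMem (haD d (hE hd))).trans image_id
  rw [Ewens.eraseFromBlocks, Ewens.insertIntoBlock]
  split_ifs with h
  · rw [image_insert, himage D subset_rfl, erase_singleton, erase_insert hD.empty_notMem]
  · have hcD := (mem_insert.mp hc).resolve_left h
    rw [image_insert, himage _ (erase_subset c D), erase_insert (haD c hcD), insert_erase hcD,
      erase_eq_of_notMem hD.empty_notMem]

theorem blockMates_insertIntoBlock (ha : a ∉ s) {D : Finset (Finset X)}
    (hD : IsSetPartition s D) {c : Finset X} (hc : c ∈ insert ∅ D) :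
    blockMates a (Ewens.insertIntoBlock a c D) = c := by
  have hC := hD.insertIntoBlock ha hc
  rw [Ewens.insertIntoBlock] at hC ⊢
  split_ifs at hC ⊢ with h
  · rw [blockMates_eq hC.disjoint (mem_insert_self _ _) (mem_singleton_self a), h,
      erase_singleton]
  · have hac : a ∉ c := fun hac => ha (hD.subset c ((mem_insert.mp hc).resolve_left h) hac)
    rw [blockMates_eq hC.disjoint (mem_insert_self _ _) (mem_insert_self a c), erase_insert hac]

end IsSetPartition

section weight

variable {R : Type*} [CommSemiring R] (x : R) {D : Finset (Finset X)}

theorem ewensWeight_insertIntoBlock_empty (ha : a ∉ s) (hD : IsSetPartition s D) :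
    ewensWeight x (insertIntoBlock a ∅ D) = x * ewensWeight x D := by
  have haD : {a} ∉ D := fun h => ha (hD.subset _ h (mem_singleton_self a))
  rw [insertIntoBlock, if_pos rfl, ewensWeight, ewensWeight, card_insert_of_notMem haD,
    prod_insert haD, card_singleton, Nat.sub_self, factorial_zero, cast_one, pow_succ]
  ring

theorem ewensWeight_insertIntoBlock_of_mem (ha : a ∉ s) (hD : IsSetPartition s D)
    {c : Finset X} (hc : c ∈ D) :
    ewensWeight x (insertIntoBlock a c D) = #c * ewensWeight x D := by
  have hac : a ∉ c := fun h => ha (hD.subset c hc h)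
  have hmem : insert a c ∉ D.erase c := fun h =>
    ha (hD.subset _ (mem_of_mem_erase h) (mem_insert_self a c))
  rw [insertIntoBlock, if_neg (hD.nonempty c hc).ne_empty, ewensWeight, ewensWeight,
    card_insert_of_notMem hmem, card_erase_add_one hc, prod_insert hmem,
    card_insert_of_notMem hac, Nat.add_sub_cancel, ← mul_prod_erase D _ hc,
    ← Nat.mul_factorial_pred (hD.nonempty c hc).card_pos.ne']
  push_cast
  ring

theorem sum_ewensWeight_insertIntoBlock (ha : a ∉ s) (hD : IsSetPartition s D) :
    ∑ c ∈ insert ∅ D, ewensWeight x (insertIntoBlock a c D) = (x + #s) * ewensWeight x D := by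
  rw [sum_insert hD.empty_notMem, ewensWeight_insertIntoBlock_empty x ha hD,
    sum_congr rfl fun c hc => ewensWeight_insertIntoBlock_of_mem x ha hD hc, ← sum_mul,
    ← hD.sum_card, cast_sum, add_mul]

end weight

open scoped Classical in
theorem sum_ewensWeight [Fintype X] {R : Type*} [CommSemiring R] (x : R) (s : Finset X) :
    ∑ C with IsSetPartition s C, ewensWeight x C = ∏ k ∈ range #s, (x + k) := by
  induction s using Finset.induction_on with
  | empty => simp [isSetPartition_empty_iff, ewensWeight, filter_eq']
  | insert a s ha ih =>
    calc ∑ C with IsSetPartition (insert a s) C, ewensWeight x C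
        = ∑ p ∈ ({D | IsSetPartition s D} : Finset _).sigma (insert ∅ ·),
            ewensWeight x (insertIntoBlock a p.2 p.1) := by
          refine sum_nbij' (fun C => ⟨eraseFromBlocks a C, blockMates a C⟩)
            (fun p => insertIntoBlock a p.2 p.1) ?_ ?_ ?_ ?_ ?_ <;>
            simp only [mem_filter, mem_univ, true_and, mem_sigma]
          · exact fun C hC => ⟨hC.eraseFromBlocks ha, hC.blockMates_mem⟩
          · exact fun p hp => hp.1.insertIntoBlock ha hp.2
          · exact fun C hC => hC.insertIntoBlock_blockMates
          · exact fun p hp => Sigma.ext (hp.1.eraseFromBlocks_insertIntoBlock ha hp.2)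
              (heq_of_eq (hp.1.blockMates_insertIntoBlock ha hp.2))
          · exact fun C hC => by rw [hC.insertIntoBlock_blockMates]
      _ = ∑ D with IsSetPartition s D, (x + #s) * ewensWeight x D := by
          rw [sum_sigma]
          exact sum_congr rfl fun D hD => sum_ewensWeight_insertIntoBlock x ha (mem_filter.mp hD).2
      _ = ∏ k ∈ range #(insert a s), (x + k) := by
          rw [← mul_sum, ih, card_insert_of_notMem ha, prod_range_succ, mul_comm]

end Ewens

open scoped Classical in
theorem stmt11_general (α : ℝ) (hα : 0 < α) (n : ℕ) :
    ∑ C ∈ Finset.univ.filter (fun C : Finset (Finset (Fin n)) =>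
        (∀ c ∈ C, c.Nonempty) ∧ (∀ c ∈ C, ∀ c' ∈ C, c ≠ c' → Disjoint c c') ∧
        (∀ p : Fin n, ∃ c ∈ C, p ∈ c)),
      α ^ C.card * Real.Gamma α / Real.Gamma (n + α) * ∏ c ∈ C, Real.Gamma c.card = 1 := by
  have hpart (C : Finset (Finset (Fin n))) :
      ((∀ c ∈ C, c.Nonempty) ∧ (∀ c ∈ C, ∀ c' ∈ C, c ≠ c' → Disjoint c c') ∧
        (∀ p : Fin n, ∃ c ∈ C, p ∈ c)) ↔ Ewens.IsSetPartition univ C :=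
    ⟨fun ⟨hne, hdis, hcov⟩ => ⟨hne, hdis, fun p _ => hcov p, fun c _ => subset_univ c⟩,
      fun hC => ⟨hC.nonempty, hC.disjoint, fun p => hC.cover p (mem_univ p)⟩⟩
  have hterm (C : Finset (Finset (Fin n))) (hC : Ewens.IsSetPartition univ C) :
      α ^ #C * Real.Gamma α / Real.Gamma (n + α) * ∏ c ∈ C, Real.Gamma #c =
        Real.Gamma α / Real.Gamma (n + α) * Ewens.ewensWeight α C := by
    rw [Ewens.ewensWeight, prod_congr rfl fun c hc =>
      Real.Gamma_natCast_eq_factorial_pred (hC.nonempty c hc).card_pos.ne']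
    ring
  rw [filter_congr fun C _ => hpart C, sum_congr rfl fun C hC => hterm C (mem_filter.mp hC).2,
    ← mul_sum, Ewens.sum_ewensWeight, Finset.card_univ, Fintype.card_fin,
    Real.Gamma_natCast_add_eq_mul_prod hα n]
  have hΓ : Real.Gamma α ≠ 0 := (Real.Gamma_pos_of_pos hα).ne'
  have hprod : ∏ k ∈ range n, (α + k) ≠ 0 := prod_ne_zero_iff.mpr fun k _ => by positivity
  field_simp

open scoped Classical in
theorem stmt11 (α : ℝ) (hα : 0 < α) (n : ℕ) (hn : 1 ≤ n) :
    ∑ C ∈ Finset.univ.filter (fun C : Finset (Finset (Fin n)) =>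
        (∀ c ∈ C, c.Nonempty) ∧ (∀ c ∈ C, ∀ c' ∈ C, c ≠ c' → Disjoint c c') ∧
        (∀ p : Fin n, ∃ c ∈ C, p ∈ c)),
      α ^ C.card * Real.Gamma α / Real.Gamma (n + α) * ∏ c ∈ C, Real.Gamma c.card = 1 :=
  stmt11_general α hα n
end
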